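/- Let X be a nonempty Polish space (separable and completely metrizable) and let (A_i)_{i∈I} be a family of meager subsets of X with |I| < cov K. Then ⋃_{i∈I} A_i ≠ X; that is, a nonempty Polish space cannot be covered by fewer than cov K many meager sets. -/

import Mathlib

/-!
The proof transfers category from `ℝ` to `X` along a Lusin-type scheme. The interval `[0, 1)` is
refined by a tree of half-open intervals, each split into countably many pieces of at most half
its length, and a ball of `X` by the countably many balls about points of a dense sequence whose
closures it contains. Following both trees along the address of `x ∈ [0, 1)` and taking the limit
of the centers defines `F : [0, 1) → X`. Given a nowhere dense `B ⊆ X`, every interval contains a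
cell of the tree, and a child of that cell whose ball misses `closure B`; so `F⁻¹ B` is nowhere
dense, and `F ∘ fract` pulls meagre sets back to meagre sets. A cover of `X` by fewer than `cov K`
meagre sets would then give one of `ℝ`, which is impossible because `ℵ₀ < cov K`.
-/

/-- `cov K`: the least cardinality of a family of nowhere dense subsets of `ℝ`
whose union is all of `ℝ`. -/
noncomputable def covK : Cardinal :=
  sInf {c : Cardinal | ∃ (ι : Type) (A : ι → Set ℝ),
    (∀ i, IsNowhereDense (A i)) ∧ (⋃ i, A i) = Set.univ ∧ c = Cardinal.mk ι}

open Set Filter Topology Metric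

lemma isNowhereDense_of_forall_exists_disjoint {X : Type*} [TopologicalSpace X] {s : Set X}
    (h : ∀ U, IsOpen U → U.Nonempty → ∃ V ⊆ U, IsOpen V ∧ V.Nonempty ∧ Disjoint V s) :
    IsNowhereDense s := by
  rw [IsNowhereDense, ← not_nonempty_iff_eq_empty]
  intro hne
  obtain ⟨V, hVU, hV, ⟨v, hv⟩, hVs⟩ := h _ isOpen_interior hne
  exact disjoint_left.1 (hVs.closure_right hV) hv (interior_subset (hVU hv))

lemma IsMeagre.preimage_of_isNowhereDense_preimage {X Y : Type*} [TopologicalSpace X]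
    [TopologicalSpace Y] {f : Y → X} (hf : ∀ s, IsNowhereDense s → IsMeagre (f ⁻¹' s))
    {s : Set X} (hs : IsMeagre s) : IsMeagre (f ⁻¹' s) := by
  obtain ⟨S, hS, hcount, hsub⟩ := isMeagre_iff_countable_union_isNowhereDense.1 hs
  refine (isMeagre_biUnion hcount fun t ht => hf t (hS t ht)).mono ?_
  rw [← preimage_iUnion₂, ← sUnion_eq_biUnion]
  exact preimage_mono hsub

lemma IsMeagre.preimage_fract {R : Type*} [Ring R] [LinearOrder R] [FloorRing R]
    [TopologicalSpace R] [IsTopologicalAddGroup R] {s : Set R} (hs : IsMeagre s) :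
    IsMeagre (Int.fract ⁻¹' s) := by
  refine (isMeagre_iUnion fun z : ℤ =>
    hs.preimage_of_isOpenMap (continuous_sub_right (z : R)) (isOpenMap_sub_right (z : R))).mono ?_
  intro x hx
  exact mem_iUnion.2 ⟨⌊x⌋, hx⟩

lemma covK_le_mk {ι : Type} (A : ι → Set ℝ) (hA : ∀ i, IsNowhereDense (A i))
    (hcover : ⋃ i, A i = univ) : covK ≤ Cardinal.mk ι :=
  csInf_le' ⟨ι, A, hA, hcover, rfl⟩

lemma aleph0_lt_covK : Cardinal.aleph0 < covK := by
  obtain ⟨ι, A, hA, hcover, hcard⟩ : covK ∈ _ :=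
    csInf_mem ⟨_, ℝ, fun x => {x}, fun x => by simp [IsNowhereDense], iUnion_of_singleton ℝ, rfl⟩
  by_contra! hle
  have : Countable ι := by rwa [← Cardinal.mk_le_aleph0_iff, ← hcard]
  refine not_isMeagre_of_isOpen (X := ℝ) isOpen_univ univ_nonempty ?_
  rw [← hcover]
  exact isMeagre_iUnion fun i => (hA i).isMeagre

theorem iUnion_ne_univ_of_isMeagre_of_mk_lt_covK (ι : Type) (A : ι → Set ℝ)
    (hcard : Cardinal.mk ι < covK) (hA : ∀ i, IsMeagre (A i)) : ⋃ i, A i ≠ univ := by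
  choose S hS hcount hsub using fun i => isMeagre_iff_countable_union_isNowhereDense.1 (hA i)
  intro hcover
  have hle : covK ≤ Cardinal.mk (Σ i, S i) := by
    refine covK_le_mk (fun t => t.2.1) (fun t => hS t.1 _ t.2.2) (eq_univ_of_univ_subset ?_)
    rw [← hcover]
    intro x hx
    obtain ⟨i, hi⟩ := mem_iUnion.1 hx
    obtain ⟨t, ht, hxt⟩ := hsub i hi
    exact mem_iUnion.2 ⟨⟨i, t, ht⟩, hxt⟩
  have hlt : Cardinal.mk (Σ i, S i) < covK := by
    calc Cardinal.mk (Σ i, S i) ≤ Cardinal.sum fun _ : ι => Cardinal.aleph0 := by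
          rw [Cardinal.mk_sigma]
          exact Cardinal.sum_le_sum _ _ fun i => (hcount i).le_aleph0
      _ = Cardinal.mk ι * Cardinal.aleph0 := by simp
      _ < covK := Cardinal.mul_lt_of_lt aleph0_lt_covK.le hcard aleph0_lt_covK
  exact hle.not_gt hlt

namespace CategoryScheme

/-- For `n : ℕ` these intervals partition `[p.1, p.2)`. -/
noncomputable def icoChild (p : ℝ × ℝ) (n : ℕ) : ℝ × ℝ :=
  (p.2 - (p.2 - p.1) / (n + 1), p.2 - (p.2 - p.1) / (n + 2))

/-- The index of the piece `icoChild p n` containing `x`. -/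
noncomputable def icoDigit (p : ℝ × ℝ) (x : ℝ) : ℕ := ⌊(p.2 - p.1) / (p.2 - x)⌋₊ - 1

lemma icoChild_fst_lt {p : ℝ × ℝ} (hp : p.1 < p.2) (n : ℕ) :
    (icoChild p n).1 < (icoChild p n).2 := by
  have : (p.2 - p.1) / (n + 2) < (p.2 - p.1) / (n + 1) :=
    div_lt_div_of_pos_left (by linarith) (by positivity) (by linarith)
  simp only [icoChild]
  linarith

lemma Ico_icoChild_subset {p : ℝ × ℝ} (hp : p.1 < p.2) (n : ℕ) :
    Ico (icoChild p n).1 (icoChild p n).2 ⊆ Ico p.1 p.2 := by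
  have h1 : (p.2 - p.1) / (n + 1) ≤ p.2 - p.1 :=
    div_le_self (by linarith) (by linarith [n.cast_nonneg (α := ℝ)])
  have h2 : 0 ≤ (p.2 - p.1) / (n + 2) := div_nonneg (by linarith) (by positivity)
  apply Ico_subset_Ico <;> simp only [icoChild] <;> linarith

lemma icoChild_length_le {p : ℝ × ℝ} (hp : p.1 < p.2) (n : ℕ) :
    (icoChild p n).2 - (icoChild p n).1 ≤ (p.2 - p.1) / 2 := by
  have hn : (0 : ℝ) ≤ n := n.cast_nonneg
  have : (icoChild p n).2 - (icoChild p n).1 = (p.2 - p.1) / ((n + 1) * (n + 2)) := by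
    simp only [icoChild]
    field_simp
    ring
  rw [this]
  exact div_le_div_of_nonneg_left (by linarith) (by norm_num) (by nlinarith)

lemma mem_Ico_icoChild_icoDigit {p : ℝ × ℝ} {x : ℝ} (hx : x ∈ Ico p.1 p.2) :
    x ∈ Ico (icoChild p (icoDigit p x)).1 (icoChild p (icoDigit p x)).2 := by
  obtain ⟨hax, hxb⟩ := hx
  have hd : 0 < p.2 - x := by linarith
  set m := ⌊(p.2 - p.1) / (p.2 - x)⌋₊ with hm
  have h1 : 1 ≤ m := Nat.le_floor (by rw [Nat.cast_one, one_le_div hd]; linarith)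
  have hcast : ((icoDigit p x : ℕ) : ℝ) = m - 1 := by
    rw [icoDigit, ← hm, Nat.cast_sub h1, Nat.cast_one]
  have hlo : (m : ℝ) * (p.2 - x) ≤ p.2 - p.1 :=
    (le_div_iff₀ hd).1 (Nat.floor_le (div_nonneg (by linarith) hd.le))
  have hhi : p.2 - p.1 < (m + 1) * (p.2 - x) :=
    (div_lt_iff₀ hd).1 (Nat.lt_floor_add_one _)
  have hm0 : (0 : ℝ) < m := by exact_mod_cast h1
  simp only [icoChild, hcast, mem_Ico]
  constructor
  · rw [sub_add_cancel, sub_le_comm, le_div_iff₀ hm0]; linarith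
  · rw [show (m : ℝ) - 1 + 2 = m + 1 by ring, lt_sub_comm, div_lt_iff₀ (by positivity)]; linarith

lemma icoDigit_eq_of_mem {p : ℝ × ℝ} (hp : p.1 < p.2) {x : ℝ} {n : ℕ}
    (hx : x ∈ Ico (icoChild p n).1 (icoChild p n).2) : icoDigit p x = n := by
  simp only [icoChild, mem_Ico] at hx
  obtain ⟨hlo, hhi⟩ := hx
  have h2 : 0 < (p.2 - p.1) / (n + 2) := div_pos (by linarith) (by positivity)
  have hd : 0 < p.2 - x := by linarith
  have hfloor : ⌊(p.2 - p.1) / (p.2 - x)⌋₊ = n + 1 := by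
    rw [Nat.floor_eq_iff (div_nonneg (by linarith) hd.le), le_div_iff₀ hd, div_lt_iff₀ hd]
    push_cast
    constructor
    · rw [sub_le_comm, le_div_iff₀ (by positivity)] at hlo
      linarith
    · rw [lt_sub_comm, div_lt_iff₀ (by positivity)] at hhi
      linarith
  rw [icoDigit, hfloor, Nat.add_sub_cancel]

/-- Addresses list the most recent index first. -/
noncomputable def cellEnds : List ℕ → ℝ × ℝ
  | [] => (0, 1)
  | n :: s => icoChild (cellEnds s) n

def cell (s : List ℕ) : Set ℝ := Ico (cellEnds s).1 (cellEnds s).2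

noncomputable def address (x : ℝ) : ℕ → List ℕ
  | 0 => []
  | k + 1 => icoDigit (cellEnds (address x k)) x :: address x k

lemma cellEnds_fst_lt : ∀ s : List ℕ, (cellEnds s).1 < (cellEnds s).2
  | [] => by norm_num [cellEnds]
  | n :: s => icoChild_fst_lt (cellEnds_fst_lt s) n

lemma cellEnds_length_le : ∀ s : List ℕ, (cellEnds s).2 - (cellEnds s).1 ≤ (1 / 2) ^ s.length
  | [] => by norm_num [cellEnds]
  | n :: s => by
    calc (cellEnds (n :: s)).2 - (cellEnds (n :: s)).1 ≤ ((cellEnds s).2 - (cellEnds s).1) / 2 :=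
          icoChild_length_le (cellEnds_fst_lt s) n
      _ ≤ (1 / 2) ^ s.length / 2 := by gcongr; exact cellEnds_length_le s
      _ = (1 / 2) ^ (n :: s).length := by rw [List.length_cons, pow_succ]; ring

lemma length_address (x : ℝ) (k : ℕ) : (address x k).length = k := by
  induction k with
  | zero => rfl
  | succ k ih => simp [address, ih]

lemma mem_cell_address {x : ℝ} (hx : x ∈ Ico (0 : ℝ) 1) (k : ℕ) : x ∈ cell (address x k) := by
  induction k with
  | zero => exact hx
  | succ k ih => exact mem_Ico_icoChild_icoDigit ih

lemma address_length_eq_of_mem_cell {x : ℝ} : ∀ {t : List ℕ}, x ∈ cell t → address x t.length = t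
  | [], _ => rfl
  | n :: s, hx => by
    have hs : address x s.length = s :=
      address_length_eq_of_mem_cell (Ico_icoChild_subset (cellEnds_fst_lt s) n hx)
    simp only [List.length_cons, address, hs, icoDigit_eq_of_mem (cellEnds_fst_lt s) hx]

lemma exists_cell_address_subset {x : ℝ} (hx : x ∈ Ico (0 : ℝ) 1) {U : Set ℝ} (hU : U ∈ 𝓝 x) :
    ∃ k, cell (address x k) ⊆ U := by
  obtain ⟨ε, hε, hball⟩ := Metric.mem_nhds_iff.1 hU
  obtain ⟨k, hk⟩ := exists_pow_lt_of_lt_one hε (by norm_num : (1 / 2 : ℝ) < 1)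
  refine ⟨k, fun y hy => hball ?_⟩
  have hlen := cellEnds_length_le (address x k)
  rw [length_address] at hlen
  have hxk := mem_cell_address hx k
  simp only [cell, mem_Ico] at hy hxk
  rw [mem_ball, Real.dist_eq, abs_lt]
  constructor <;> linarith

section Balls

open TopologicalSpace

variable (X : Type*) [PseudoMetricSpace X] [SeparableSpace X] [Nonempty X]

noncomputable def ballChild (c : X) (r : ℝ) (n : ℕ) : X × ℝ :=
  haveI := Classical.propDecidable
  if closedBall (denseSeq X n.unpair.1) (r / (n.unpair.2 + 2)) ⊆ ball c r then
    (denseSeq X n.unpair.1, r / (n.unpair.2 + 2))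
  else (c, r / 2)

noncomputable def ballNode : List ℕ → X × ℝ
  | [] => (denseSeq X 0, 1)
  | n :: s => ballChild X (ballNode s).1 (ballNode s).2 n

variable {X}

lemma ballChild_radius_pos {c : X} {r : ℝ} (hr : 0 < r) (n : ℕ) : 0 < (ballChild X c r n).2 := by
  unfold ballChild
  split_ifs <;> positivity

lemma ballChild_radius_le {c : X} {r : ℝ} (hr : 0 < r) (n : ℕ) : (ballChild X c r n).2 ≤ r / 2 := by
  unfold ballChild
  split_ifs
  · have : (0 : ℝ) ≤ n.unpair.2 := Nat.cast_nonneg _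
    exact div_le_div_of_nonneg_left hr.le (by norm_num) (by linarith)
  · exact le_rfl

lemma closedBall_ballChild_subset {c : X} {r : ℝ} (hr : 0 < r) (n : ℕ) :
    closedBall (ballChild X c r n).1 (ballChild X c r n).2 ⊆ ball c r := by
  unfold ballChild
  split_ifs with h
  · exact h
  · exact closedBall_subset_ball (by linarith)

lemma exists_closedBall_ballChild_subset {c : X} {r : ℝ} {V : Set X} (hV : IsOpen V)
    (hne : V.Nonempty) (hsub : V ⊆ ball c r) :
    ∃ n, closedBall (ballChild X c r n).1 (ballChild X c r n).2 ⊆ V := by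
  obtain ⟨y, hy⟩ := hne
  obtain ⟨ε, hε, hball⟩ := Metric.isOpen_iff.1 hV y hy
  obtain ⟨j, hj⟩ := exists_nat_gt (2 * r / ε)
  obtain ⟨k, hk⟩ := (denseRange_denseSeq X).exists_dist_lt y (half_pos hε)
  have hρ : r / (j + 2) < ε / 2 := by
    rw [div_lt_iff₀ (by positivity)]
    rw [div_lt_iff₀ hε] at hj
    nlinarith
  have hV' : closedBall (denseSeq X k) (r / (j + 2)) ⊆ V := fun w hw => hball <| by
    rw [mem_closedBall] at hw
    rw [mem_ball]
    linarith [dist_triangle w (denseSeq X k) y, dist_comm y (denseSeq X k)]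
  refine ⟨Nat.pair k j, ?_⟩
  rw [ballChild, Nat.unpair_pair, if_pos (hV'.trans hsub)]
  exact hV'

lemma ballNode_radius_pos : ∀ s : List ℕ, 0 < (ballNode X s).2
  | [] => one_pos
  | n :: s => ballChild_radius_pos (ballNode_radius_pos s) n

lemma ballNode_radius_le : ∀ s : List ℕ, (ballNode X s).2 ≤ (1 / 2) ^ s.length
  | [] => by simp [ballNode]
  | n :: s => by
    calc (ballNode X (n :: s)).2 ≤ (ballNode X s).2 / 2 :=
          ballChild_radius_le (ballNode_radius_pos s) n
      _ ≤ (1 / 2) ^ s.length / 2 := by gcongr; exact ballNode_radius_le s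
      _ = (1 / 2) ^ (n :: s).length := by rw [List.length_cons, pow_succ]; ring

lemma closedBall_ballNode_cons_subset (n : ℕ) (s : List ℕ) :
    closedBall (ballNode X (n :: s)).1 (ballNode X (n :: s)).2 ⊆
      ball (ballNode X s).1 (ballNode X s).2 :=
  closedBall_ballChild_subset (ballNode_radius_pos s) n

variable (X) in
noncomputable def schemeMap [CompleteSpace X] (x : ℝ) : X :=
  limUnder atTop fun k => (ballNode X (address x k)).1

lemma ball_ballNode_address_subset (x : ℝ) {k m : ℕ} (hkm : k ≤ m) :
    ball (ballNode X (address x m)).1 (ballNode X (address x m)).2 ⊆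
      ball (ballNode X (address x k)).1 (ballNode X (address x k)).2 := by
  induction m, hkm using Nat.le_induction with
  | base => exact subset_rfl
  | succ m _ ih =>
    exact ball_subset_closedBall.trans ((closedBall_ballNode_cons_subset _ _).trans ih)

lemma cauchySeq_ballNode_address (x : ℝ) : CauchySeq fun k => (ballNode X (address x k)).1 := by
  refine cauchySeq_of_le_geometric (1 / 2) 1 (by norm_num) fun k => ?_
  have hmem := closedBall_ballNode_cons_subset (X := X) _ _
    (mem_closedBall_self (ballNode_radius_pos (address x (k + 1))).le)
  have hle := ballNode_radius_le (X := X) (address x k)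
  rw [length_address] at hle
  rw [mem_ball, dist_comm] at hmem
  rw [one_mul]
  exact (hmem.trans_le hle).le

lemma schemeMap_mem_closedBall [CompleteSpace X] (x : ℝ) (k : ℕ) :
    schemeMap X x ∈ closedBall (ballNode X (address x k)).1 (ballNode X (address x k)).2 := by
  refine isClosed_closedBall.mem_of_tendsto (cauchySeq_ballNode_address x).tendsto_limUnder ?_
  filter_upwards [eventually_ge_atTop k] with m hm
  exact ball_subset_closedBall
    (ball_ballNode_address_subset x hm (mem_ball_self (ballNode_radius_pos _)))

lemma schemeMap_mem_closedBall_of_mem_cell [CompleteSpace X] {x : ℝ} {t : List ℕ}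
    (hx : x ∈ cell t) : schemeMap X x ∈ closedBall (ballNode X t).1 (ballNode X t).2 := by
  simpa only [address_length_eq_of_mem_cell hx] using schemeMap_mem_closedBall (X := X) x t.length

theorem isNowhereDense_preimage_schemeMap_inter_Ico [CompleteSpace X] {B : Set X}
    (hB : IsNowhereDense B) : IsNowhereDense (schemeMap X ⁻¹' B ∩ Ico 0 1) := by
  refine isNowhereDense_of_forall_exists_disjoint fun J hJ hJne => ?_
  by_cases hmeet : (J ∩ Ico 0 1).Nonempty
  swap
  · refine ⟨J, subset_rfl, hJ, hJne, disjoint_left.2 fun y hyJ hy => hmeet ⟨y, hyJ, hy.2⟩⟩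
  obtain ⟨x, hxJ, hx⟩ := hmeet
  obtain ⟨k, hk⟩ := exists_cell_address_subset hx (hJ.mem_nhds hxJ)
  set s := address x k
  have hne : (ball (ballNode X s).1 (ballNode X s).2 \ closure B).Nonempty :=
    (interior_eq_empty_iff_dense_compl.1 hB).inter_open_nonempty _ isOpen_ball
      ⟨_, mem_ball_self (ballNode_radius_pos s)⟩
  obtain ⟨n, hn⟩ := exists_closedBall_ballChild_subset (isOpen_ball.sdiff isClosed_closure) hne
    sdiff_subset
  refine ⟨Ioo (cellEnds (n :: s)).1 (cellEnds (n :: s)).2,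
    Ioo_subset_Ico_self.trans ((Ico_icoChild_subset (cellEnds_fst_lt s) n).trans hk), isOpen_Ioo,
    nonempty_Ioo.2 (cellEnds_fst_lt _), disjoint_left.2 fun y hy hyB => ?_⟩
  exact (hn (schemeMap_mem_closedBall_of_mem_cell (Ioo_subset_Ico_self hy))).2
    (subset_closure hyB.1)

end Balls

end CategoryScheme

open CategoryScheme in
theorem exists_real_map_isMeagre_preimage (X : Type*) [PseudoMetricSpace X] [CompleteSpace X]
    [TopologicalSpace.SeparableSpace X] [Nonempty X] :
    ∃ F : ℝ → X, ∀ B : Set X, IsNowhereDense B → IsMeagre (F ⁻¹' B) := by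
  refine ⟨schemeMap X ∘ Int.fract, fun B hB => ?_⟩
  have hmeagre : IsMeagre (schemeMap X ⁻¹' B ∩ Ico 0 1) :=
    (isNowhereDense_preimage_schemeMap_inter_Ico hB).isMeagre
  refine hmeagre.preimage_fract.mono fun x hx => ?_
  exact ⟨hx, Int.fract_nonneg x, Int.fract_lt_one x⟩

/-- A nonempty Polish space cannot be covered by fewer than `cov K` many meager sets. -/
theorem polish_not_covered_by_lt_covK_meager {X : Type*} [TopologicalSpace X]
    [PolishSpace X] [Nonempty X] (ι : Type) (A : ι → Set X)
    (hcard : Cardinal.mk ι < covK) (hA : ∀ i, IsMeagre (A i)) :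
    (⋃ i, A i) ≠ Set.univ := by
  let := TopologicalSpace.upgradeIsCompletelyMetrizable X
  obtain ⟨F, hF⟩ := exists_real_map_isMeagre_preimage X
  intro hcover
  refine iUnion_ne_univ_of_isMeagre_of_mk_lt_covK ι (fun i => F ⁻¹' A i) hcard
    (fun i => (hA i).preimage_of_isNowhereDense_preimage hF) ?_
  rw [← preimage_iUnion, hcover, preimage_univ]
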